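/- Let b₁ ≤ a₁ < a₂ ≤ b₂ be real numbers, let μ be the uniform probability measure on [a₁,a₂] and ν the uniform probability measure on [b₁,b₂]. With the mutual energy E(μ,ν) := ∫∫ max(x,y) dμ dν − ½∫∫ max dμ dμ − ½∫∫ max dν dν, and setting ℓ_a = a₂−a₁, ℓ_b = b₂−b₁, ℓ' = a₁−b₁, ℓ'' = b₂−a₂, one has E(μ,ν) = ℓ_b/6 − ℓ_a/3 + ℓ_a²/(6ℓ_b) − (ℓ'·ℓ'')/(2ℓ_b). -/

import Mathlib

/-!
Against the uniform law on `[c, d]`, the kernel `max x y` integrates in `y` to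
`x + (d - x)² / (2 (d - c))` for every `x ∈ [c, d]`. Averaging this quadratic over `[r, s] ⊆ [c, d]`
gives every double integral in the energy in closed form, and the identity is then algebra.
-/

open MeasureTheory

/-- The uniform probability measure on the interval `[r, s]`. -/
noncomputable def unifIcc (r s : ℝ) : Measure ℝ :=
  (ENNReal.ofReal (s - r))⁻¹ • (volume.restrict (Set.Icc r s))

/-- The mutual energy of two measures on `ℝ` with respect to the kernel `max x y`. -/
noncomputable def mutualE (μ ν : Measure ℝ) : ℝ :=
  (∫ x, ∫ y, max x y ∂ν ∂μ)
    - (1/2) * (∫ x, ∫ y, max x y ∂μ ∂μ)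
    - (1/2) * (∫ x, ∫ y, max x y ∂ν ∂ν)

theorem integral_unifIcc (f : ℝ → ℝ) {r s : ℝ} (hrs : r ≤ s) :
    ∫ x, f x ∂(unifIcc r s) = (s - r)⁻¹ * ∫ x in r..s, f x := by
  rw [unifIcc, integral_smul_measure, ENNReal.toReal_inv, ENNReal.toReal_ofReal (by linarith),
    integral_Icc_eq_integral_Ioc, ← intervalIntegral.integral_of_le hrs, smul_eq_mul]

theorem intervalIntegral_max_left {c d x : ℝ} (hx : x ∈ Set.Icc c d) :
    ∫ y in c..d, max x y = x * (x - c) + (d ^ 2 - x ^ 2) / 2 := by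
  have hmax : Continuous fun y : ℝ => max x y := continuous_const.max continuous_id
  rw [← intervalIntegral.integral_add_adjacent_intervals (b := x)
    (hmax.intervalIntegrable c x) (hmax.intervalIntegrable x d)]
  have below : ∫ y in c..x, max x y = ∫ _ in c..x, x :=
    intervalIntegral.integral_congr fun y hy => by
      rw [Set.uIcc_of_le hx.1] at hy
      exact max_eq_left hy.2
  have above : ∫ y in x..d, max x y = ∫ y in x..d, y :=
    intervalIntegral.integral_congr fun y hy => by
      rw [Set.uIcc_of_le hx.2] at hy
      exact max_eq_right hy.1
  rw [below, above, intervalIntegral.integral_const, integral_id, smul_eq_mul]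
  ring

theorem integral_max_unifIcc {c d x : ℝ} (hcd : c < d) (hx : x ∈ Set.Icc c d) :
    ∫ y, max x y ∂(unifIcc c d) = x + (d - x) ^ 2 / (2 * (d - c)) := by
  rw [integral_unifIcc _ hcd.le, intervalIntegral_max_left hx]
  field_simp [(sub_pos.mpr hcd).ne']
  ring

theorem intervalIntegral_sub_sq (d r s : ℝ) :
    ∫ x in r..s, (d - x) ^ 2 = ((d - r) ^ 3 - (d - s) ^ 3) / 3 := by
  rw [intervalIntegral.integral_comp_sub_left (fun x => x ^ 2), integral_pow]
  ring

theorem integral_integral_max_unifIcc {r s c d : ℝ} (hrs : r < s) (hcd : c < d)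
    (hcr : c ≤ r) (hsd : s ≤ d) :
    ∫ x, ∫ y, max x y ∂(unifIcc c d) ∂(unifIcc r s)
      = (r + s) / 2 + ((d - r) ^ 3 - (d - s) ^ 3) / (6 * (d - c) * (s - r)) := by
  have hinner : ∫ x in r..s, (∫ y, max x y ∂(unifIcc c d))
      = ∫ x in r..s, (x + (2 * (d - c))⁻¹ * (d - x) ^ 2) :=
    intervalIntegral.integral_congr fun x hx => by
      rw [Set.uIcc_of_le hrs.le] at hx
      rw [integral_max_unifIcc hcd ⟨hcr.trans hx.1, hx.2.trans hsd⟩, div_eq_inv_mul]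
  have hsq : IntervalIntegrable (fun x : ℝ => (2 * (d - c))⁻¹ * (d - x) ^ 2) volume r s :=
    (by fun_prop : Continuous fun x : ℝ => (2 * (d - c))⁻¹ * (d - x) ^ 2).intervalIntegrable r s
  rw [integral_unifIcc _ hrs.le, hinner,
    intervalIntegral.integral_add intervalIntegral.intervalIntegrable_id hsq,
    intervalIntegral.integral_const_mul, integral_id, intervalIntegral_sub_sq]
  field_simp [(sub_pos.mpr hrs).ne', (sub_pos.mpr hcd).ne']
  ring

theorem integral_integral_max_unifIcc_self {r s : ℝ} (hrs : r < s) :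
    ∫ x, ∫ y, max x y ∂(unifIcc r s) ∂(unifIcc r s) = (r + s) / 2 + (s - r) / 6 := by
  rw [integral_integral_max_unifIcc hrs hrs le_rfl le_rfl]
  field_simp [(sub_pos.mpr hrs).ne']
  ring

theorem stmt_10 (b₁ a₁ a₂ b₂ : ℝ) (h₁ : b₁ ≤ a₁) (h₂ : a₁ < a₂) (h₃ : a₂ ≤ b₂) :
    mutualE (unifIcc a₁ a₂) (unifIcc b₁ b₂)
      = (b₂ - b₁) / 6 - (a₂ - a₁) / 3 + (a₂ - a₁) ^ 2 / (6 * (b₂ - b₁))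
        - (a₁ - b₁) * (b₂ - a₂) / (2 * (b₂ - b₁)) := by
  have hb : b₁ < b₂ := h₁.trans_lt (h₂.trans_le h₃)
  rw [mutualE, integral_integral_max_unifIcc h₂ hb h₁ h₃,
    integral_integral_max_unifIcc_self h₂, integral_integral_max_unifIcc_self hb]
  field_simp [(sub_pos.mpr h₂).ne', (sub_pos.mpr hb).ne']
  ring
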